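/- arXiv:1608.04146 — 3 statements merged into one kernel-verified Lean document; each statement's English description precedes it below -/
import Mathlib

section
/- Kronecker's theorem: an algebraic integer α ≠ 0 has house exactly 1 (all its Galois conjugates lie on the unit circle) if and only if α is a root of unity. -/
/-- The *house* of an algebraic number `α : ℂ`: the maximum of the absolute values of
the complex roots of the minimal polynomial of `α` over `ℚ` (the Galois conjugates). -/
noncomputable def house (α : ℂ) : ℝ :=
  sSup ((fun z : ℂ => ‖z‖) '' (minpoly ℚ α).rootSet ℂ)

/-!
If every conjugate of the algebraic integer `α` has absolute value at most `1`, then so does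
every conjugate of every power `α ^ k`; these powers are algebraic integers in the number field
`ℚ⟮α⟯` whose conjugates are uniformly bounded, and there are only finitely many such. Hence
`α ^ a = α ^ b` for some `a < b`, and `α ^ (b - a) = 1` since `α ≠ 0`. Conversely, every
conjugate of a root of unity is a root of the same polynomial `X ^ n - 1`, so lies on the unit
circle.
-/

open IntermediateField Polynomial

theorem pow_eq_one_of_mem_rootSet_minpoly {K L : Type*} [Field K] [Field L] [Algebra K L]
    {α β : L} {n : ℕ} (hαn : α ^ n = 1) (hβ : β ∈ (minpoly K α).rootSet L) : β ^ n = 1 := by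
  have hdvd : minpoly K α ∣ X ^ n - 1 := minpoly.dvd K α (by simp [hαn])
  simpa [sub_eq_zero] using aeval_eq_zero_of_dvd_aeval_eq_zero hdvd (mem_rootSet.1 hβ).2

theorem norm_le_house {α β : ℂ} (hβ : β ∈ (minpoly ℚ α).rootSet ℂ) :
    ‖β‖ ≤ house α :=
  le_csSup (((minpoly ℚ α).rootSet_finite ℂ).image _).bddAbove ⟨β, hβ, rfl⟩

theorem house_eq_of_forall_norm_eq {α : ℂ} {r : ℝ} (hα : IsIntegral ℚ α)
    (h : ∀ β ∈ (minpoly ℚ α).rootSet ℂ, ‖β‖ = r) : house α = r := by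
  have hαα : α ∈ (minpoly ℚ α).rootSet ℂ := mem_rootSet.2 ⟨minpoly.ne_zero hα, minpoly.aeval ℚ α⟩
  have : (fun z : ℂ => ‖z‖) '' (minpoly ℚ α).rootSet ℂ = {r} :=
    Set.eq_singleton_iff_nonempty_unique_mem.2
      ⟨⟨‖α‖, α, hαα, rfl⟩, by rintro _ ⟨β, hβ, rfl⟩; exact h β hβ⟩
  rw [house, this, csSup_singleton]

theorem house_eq_one_of_pow_eq_one {α : ℂ} {n : ℕ} (hn : 0 < n) (hαn : α ^ n = 1) :
    house α = 1 :=
  house_eq_of_forall_norm_eq (.of_pow hn (hαn ▸ isIntegral_one)) fun _ hβ =>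
    Complex.norm_eq_one_of_pow_eq_one (pow_eq_one_of_mem_rootSet_minpoly hαn hβ) hn.ne'

theorem pow_eq_one_of_house_le_one {α : ℂ} (hint : IsIntegral ℤ α) (hα : α ≠ 0)
    (h : house α ≤ 1) : ∃ n : ℕ, 0 < n ∧ α ^ n = 1 := by
  have hQ : IsIntegral ℚ α := hint.tower_top
  have : FiniteDimensional ℚ ℚ⟮α⟯ := adjoin.finiteDimensional hQ
  have : NumberField ℚ⟮α⟯ := ⟨⟩
  set x := AdjoinSimple.gen ℚ α
  have hxα : algebraMap ℚ⟮α⟯ ℂ x = α := AdjoinSimple.algebraMap_gen ℚ α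
  have hx0 : x ≠ 0 := fun h0 => hα (by rw [← hxα, h0, map_zero])
  have hxi : IsIntegral ℤ x := by
    rwa [← isIntegral_algebraMap_iff (algebraMap ℚ⟮α⟯ ℂ).injective, hxα]
  have hconj (φ : ℚ⟮α⟯ →+* ℂ) : φ x ∈ (minpoly ℚ α).rootSet ℂ := by
    rw [show minpoly ℚ α = minpoly ℚ x from (minpoly_gen ℚ α).symm,
      ← NumberField.Embeddings.range_eval_eq_rootSet_minpoly ℚ⟮α⟯ ℂ x]
    exact ⟨φ, rfl⟩
  obtain ⟨n, hn, hxn⟩ := NumberField.Embeddings.pow_eq_one_of_norm_le_one ℚ⟮α⟯ ℂ hx0 hxi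
    fun φ => (norm_le_house (hconj φ)).trans h
  exact ⟨n, hn, by rw [← hxα, ← map_pow, hxn, map_one]⟩

/-- Kronecker's theorem: a nonzero algebraic integer has house exactly `1`
if and only if it is a root of unity. -/
theorem kronecker (α : ℂ) (hint : IsIntegral ℤ α) (hα : α ≠ 0) :
    house α = 1 ↔ ∃ n : ℕ, 0 < n ∧ α ^ n = 1 :=
  ⟨fun h => pow_eq_one_of_house_le_one hint hα h.le,
    fun ⟨_, hn, hαn⟩ => house_eq_one_of_pow_eq_one hn hαn⟩
end

section
/- Let k be a number field and h = p/q ∈ k(x) with deg p > deg q + 1. Then there exists a nonzero integer D, depending only on h, such that for every algebraic number α and every n ≥ 1, if h^n(α) is an algebraic integer then D·h^j(α) is an algebraic integer for every j with 0 ≤ j ≤ n − 1. -/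
/-- The map `x ↦ P(x)/Q(x)` on `ℂ` given by a pair of polynomials. -/
noncomputable def ratMap (P Q : Polynomial ℂ) : ℂ → ℂ := fun x => P.eval x / Q.eval x

/-!
Scale `h = p/q` so that both polynomials have algebraic-integer coefficients and the numerator
has an integer `D` as leading coefficient. Let `v` be the valuation of a valuation subring of `ℂ`;
it is `≤ 1` on algebraic integers. If `v (D·β) > 1`, the leading term of the numerator dominates
and, since its degree exceeds that of the denominator by at least two, `v (D·h(β)) > v (D·β)`.
So `v (D·hʲ(α)) > 1` would propagate to `v (D·hⁿ(α)) > 1`, contradicting integrality of `hⁿ(α)`.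
Thus `D·hʲ(α)` lies in every valuation subring of `ℂ`, whose intersection is the ring of
algebraic integers.
-/

open Polynomial

namespace Valuation

variable {F Γ : Type*} [Field F] [LinearOrderedCommGroupWithZero Γ] (v : Valuation F Γ)

theorem map_eval_le_pow_natDegree {Q : F[X]} (hQ : ∀ i, v (Q.coeff i) ≤ 1) {β : F}
    (hβ : 1 ≤ v β) : v (Q.eval β) ≤ v β ^ Q.natDegree := by
  rw [eval_eq_sum_range]
  refine v.map_sum_le fun i hi => ?_
  rw [map_mul, map_pow]
  calc v (Q.coeff i) * v β ^ i ≤ 1 * v β ^ i := by gcongr; exact hQ i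
    _ ≤ v β ^ Q.natDegree := by
      rw [one_mul]; exact pow_le_pow_right₀ hβ (Nat.lt_succ_iff.mp (Finset.mem_range.mp hi))

theorem map_eval_eq_of_one_lt {P : F[X]} (hP : ∀ i, v (P.coeff i) ≤ 1) (hd : 0 < P.natDegree)
    {β : F} (hβ : 1 < v (P.leadingCoeff * β)) :
    v (P.eval β) = v P.leadingCoeff * v β ^ P.natDegree := by
  have hβ' : 1 < v β := hβ.trans_le (by
    rw [map_mul]; exact mul_le_of_le_one_left' (hP _))
  have hlower : v (P.eraseLead.eval β) ≤ v β ^ (P.natDegree - 1) := by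
    refine (v.map_eval_le_pow_natDegree (fun i => ?_) hβ'.le).trans
      (pow_le_pow_right₀ hβ'.le (eraseLead_natDegree_le P))
    rw [eraseLead_coeff]; split_ifs
    · simp
    · exact hP i
  have hlead : v β ^ (P.natDegree - 1) < v ((C P.leadingCoeff * X ^ P.natDegree).eval β) := by
    rw [eval_mul, eval_C, eval_pow, eval_X, map_mul, map_pow,
      ← Nat.sub_add_cancel hd, pow_succ, ← mul_assoc, mul_comm _ (v β ^ _), mul_assoc, ← map_mul]
    exact lt_mul_of_one_lt_right (pow_pos (zero_lt_one.trans hβ') _) hβ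
  conv_lhs => rw [← eraseLead_add_C_mul_X_pow P]
  rw [eval_add, v.map_add_eq_of_lt_right (hlower.trans_lt hlead), eval_mul, eval_C, eval_pow,
    eval_X, map_mul, map_pow]

theorem lt_map_leadingCoeff_mul_div_eval {P Q : F[X]} (hP : ∀ i, v (P.coeff i) ≤ 1)
    (hQ : ∀ i, v (Q.coeff i) ≤ 1) (hdeg : Q.natDegree + 1 < P.natDegree) {β : F}
    (hQβ : Q.eval β ≠ 0) (hβ : 1 < v (P.leadingCoeff * β)) :
    v (P.leadingCoeff * β) < v (P.leadingCoeff * (P.eval β / Q.eval β)) := by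
  have hβ' : 1 < v β := hβ.trans_le (by
    rw [map_mul]; exact mul_le_of_le_one_left' (hP _))
  have hpos : 0 < v (P.leadingCoeff * β) * v β ^ (P.natDegree - 2) :=
    mul_pos (zero_lt_one.trans hβ) (pow_pos (zero_lt_one.trans hβ') _)
  rw [← mul_div_assoc, map_div₀, lt_div_iff₀ (v.pos_iff.mpr hQβ), map_mul v _ (P.eval β),
    v.map_eval_eq_of_one_lt hP (by omega) hβ]
  calc v (P.leadingCoeff * β) * v (Q.eval β)
      ≤ v (P.leadingCoeff * β) * v β ^ (P.natDegree - 2) := by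
        gcongr
        exact (v.map_eval_le_pow_natDegree hQ hβ'.le).trans (pow_le_pow_right₀ hβ'.le (by omega))
    _ < v (P.leadingCoeff * β) * v β ^ (P.natDegree - 2) * v (P.leadingCoeff * β) :=
        lt_mul_of_one_lt_right hpos hβ
    _ = v P.leadingCoeff * (v P.leadingCoeff * v β ^ P.natDegree) := by
        rw [← pow_sub_mul_pow (v β) (show 2 ≤ P.natDegree by omega), map_mul, pow_two]
        ac_rfl

theorem one_lt_map_leadingCoeff_mul_iterate {P Q : F[X]} (hP : ∀ i, v (P.coeff i) ≤ 1)
    (hQ : ∀ i, v (Q.coeff i) ≤ 1) (hdeg : Q.natDegree + 1 < P.natDegree) {β : F} {j n : ℕ}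
    (hjn : j ≤ n) (hQβ : ∀ i < n, Q.eval ((fun x => P.eval x / Q.eval x)^[i] β) ≠ 0)
    (hβ : 1 < v (P.leadingCoeff * (fun x => P.eval x / Q.eval x)^[j] β)) :
    1 < v (P.leadingCoeff * (fun x => P.eval x / Q.eval x)^[n] β) := by
  induction n, hjn using Nat.le_induction with
  | base => exact hβ
  | succ n hjn ih =>
    have hn := ih fun i hi => hQβ i (by omega)
    rw [Function.iterate_succ_apply']
    exact hn.trans (v.lt_map_leadingCoeff_mul_div_eval hP hQ hdeg (hQβ n (by omega)) hn)

end Valuation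

theorem isIntegral_int_of_forall_mem_valuationSubring {K : Type*} [Field K] {x : K}
    (h : ∀ V : ValuationSubring K, x ∈ V) : IsIntegral ℤ x := by
  by_contra hx
  obtain ⟨V, -, hxV⟩ := Subring.exists_le_valuationSubring_of_isIntegrallyClosedIn
    (R := (integralClosure ℤ K).toSubring) hx
  exact hxV (h V)

theorem ValuationSubring.mem_of_isIntegral_int {K : Type*} [Field K] (V : ValuationSubring K)
    {x : K} (hx : IsIntegral ℤ x) : x ∈ V := by
  obtain ⟨y, rfl⟩ := IsIntegrallyClosed.isIntegral_iff.mp (hx.tower_top (A := V))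
  exact y.2

theorem isIntegral_leadingCoeff_mul_iterate {F : Type*} [Field F] {P Q : F[X]}
    (hP : ∀ i, IsIntegral ℤ (P.coeff i)) (hQ : ∀ i, IsIntegral ℤ (Q.coeff i))
    (hdeg : Q.natDegree + 1 < P.natDegree) {β : F} {j n : ℕ} (hjn : j ≤ n)
    (hQβ : ∀ i < n, Q.eval ((fun x => P.eval x / Q.eval x)^[i] β) ≠ 0)
    (hn : IsIntegral ℤ ((fun x => P.eval x / Q.eval x)^[n] β)) :
    IsIntegral ℤ (P.leadingCoeff * (fun x => P.eval x / Q.eval x)^[j] β) := by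
  refine isIntegral_int_of_forall_mem_valuationSubring fun V => ?_
  have hV {x : F} (hx : IsIntegral ℤ x) : V.valuation x ≤ 1 :=
    (V.valuation_le_one_iff x).mpr (V.mem_of_isIntegral_int hx)
  rw [← V.valuation_le_one_iff]
  by_contra! hj
  exact (V.valuation.one_lt_map_leadingCoeff_mul_iterate (fun i => hV (hP i))
    (fun i => hV (hQ i)) hdeg hjn hQβ hj).not_ge (hV ((hP _).mul hn))

theorem isIntegral_mul_leadingCoeff_mul_iterate {F : Type*} [Field F] {P Q : F[X]} {c : F}
    (hc : c ≠ 0) (hP : ∀ i, IsIntegral ℤ (c * P.coeff i)) (hQ : ∀ i, IsIntegral ℤ (c * Q.coeff i))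
    (hdeg : Q.natDegree + 1 < P.natDegree) {β : F} {j n : ℕ} (hjn : j ≤ n)
    (hQβ : ∀ i < n, Q.eval ((fun x => P.eval x / Q.eval x)^[i] β) ≠ 0)
    (hn : IsIntegral ℤ ((fun x => P.eval x / Q.eval x)^[n] β)) :
    IsIntegral ℤ (c * P.leadingCoeff * (fun x => P.eval x / Q.eval x)^[j] β) := by
  have hg : (fun x => (C c * P).eval x / (C c * Q).eval x) = fun x => P.eval x / Q.eval x := by
    funext x
    simp only [eval_mul, eval_C, mul_div_mul_left _ _ hc]
  have := isIntegral_leadingCoeff_mul_iterate (P := C c * P) (Q := C c * Q) (β := β)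
    (by simpa only [coeff_C_mul] using hP) (by simpa only [coeff_C_mul] using hQ)
    (by simpa only [natDegree_C_mul hc] using hdeg) hjn
    (fun i hi => by rw [hg, eval_mul, eval_C]; exact mul_ne_zero hc (hQβ i hi))
    (by rwa [hg])
  rwa [hg, leadingCoeff_mul, leadingCoeff_C] at this

theorem Polynomial.exists_smul_coeff_isIntegral (R : Type*) {A : Type*} [CommRing R]
    [IsDomain R] [CommRing A] [Algebra R A] [Algebra.IsAlgebraic R A] (s : Finset A[X]) :
    ∃ y ≠ (0 : R), ∀ P ∈ s, ∀ i, IsIntegral R (y • P.coeff i) := by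
  classical
  obtain ⟨y, hy, hint⟩ := Algebra.IsAlgebraic.exists_integral_multiples R (s.biUnion coeffs)
  refine ⟨y, hy, fun P hP i => ?_⟩
  by_cases hi : P.coeff i = 0
  · simpa [hi] using isIntegral_zero
  · exact hint _ (Finset.mem_biUnion.mpr ⟨P, hP, coeff_mem_coeffs hi⟩)

theorem NumberField.isAlgebraic_int (K : Type*) [Field K] [NumberField K] :
    Algebra.IsAlgebraic ℤ K :=
  have := IsLocalization.isAlgebraic ℚ (nonZeroDivisors ℤ)
  have := NumberField.isAlgebraic K
  Algebra.IsAlgebraic.trans ℤ ℚ K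

theorem denominator_bound_for_iterates_general {K : Type*} [Field K] [NumberField K]
    (f : K →+* ℂ) (p q : Polynomial K)
    (hdeg : q.natDegree + 1 < p.natDegree) :
    ∃ D : ℤ, D ≠ 0 ∧
      ∀ (α : ℂ), IsAlgebraic ℚ α → ∀ n : ℕ, 1 ≤ n →
        (∀ j < n, (q.map f).eval ((ratMap (p.map f) (q.map f))^[j] α) ≠ 0) →
        IsIntegral ℤ ((ratMap (p.map f) (q.map f))^[n] α) →
        ∀ j < n, IsIntegral ℤ ((D : ℂ) * (ratMap (p.map f) (q.map f))^[j] α) := by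
  classical
  have := NumberField.isAlgebraic_int K
  have hp : p.leadingCoeff ≠ 0 := by
    simpa using (show p ≠ 0 by rintro rfl; simp at hdeg)
  obtain ⟨A, hA, hint⟩ := exists_smul_coeff_isIntegral ℤ
    {C p.leadingCoeff⁻¹ * p, C p.leadingCoeff⁻¹ * q}
  set c : ℂ := A * f p.leadingCoeff⁻¹
  have hc : c ≠ 0 := mul_ne_zero (by exact_mod_cast hA) (by simpa using hp)
  have hcoeff {r : K[X]} (hr : C p.leadingCoeff⁻¹ * r ∈
      ({C p.leadingCoeff⁻¹ * p, C p.leadingCoeff⁻¹ * q} : Finset K[X])) (i : ℕ) :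
      IsIntegral ℤ (c * (r.map f).coeff i) := by
    simpa [c, coeff_C_mul, zsmul_eq_mul, mul_assoc] using (hint _ hr i).map f.toIntAlgHom
  have hlc : c * (p.map f).leadingCoeff = A := by
    rw [leadingCoeff_map, mul_assoc, ← map_mul, inv_mul_cancel₀ hp, map_one, mul_one]
  refine ⟨A, hA, fun α _ n _ hq hn j hj => hlc ▸ ?_⟩
  exact isIntegral_mul_leadingCoeff_mul_iterate hc (hcoeff (by simp)) (hcoeff (by simp))
    (by simpa only [natDegree_map] using hdeg) hj.le hq hn

/-- Let `h = p/q` over a number field `K` (embedded in `ℂ` via `f`) with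
`deg p > deg q + 1`.  Then there is a nonzero integer `D`, depending only on `h`,
such that whenever `hⁿ(α)` is an algebraic integer (all iterates being defined at `α`),
`D·hʲ(α)` is an algebraic integer for all `0 ≤ j ≤ n - 1`. -/
theorem denominator_bound_for_iterates {K : Type*} [Field K] [NumberField K]
    (f : K →+* ℂ) (p q : Polynomial K) (hq : q ≠ 0)
    (hdeg : q.natDegree + 1 < p.natDegree) :
    ∃ D : ℤ, D ≠ 0 ∧
      ∀ (α : ℂ), IsAlgebraic ℚ α → ∀ n : ℕ, 1 ≤ n →
        (∀ j < n, (q.map f).eval ((ratMap (p.map f) (q.map f))^[j] α) ≠ 0) →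
        IsIntegral ℤ ((ratMap (p.map f) (q.map f))^[n] α) →
        ∀ j < n, IsIntegral ℤ ((D : ℂ) * (ratMap (p.map f) (q.map f))^[j] α) :=
  denominator_bound_for_iterates_general f p q hdeg
end

section
/- Let k be a number field and h = p/q ∈ k(x) with deg p > deg q + 1. Then there exists a real number T > 0, depending only on h, such that for every real A ≥ 1, every algebraic number α, and every n ≥ 1: if the house of h^n(α) is at most A, then the house of h^j(α) is at most max(T, A) for every j with 0 ≤ j ≤ n − 1. -/
open Polynomial Filter Bornology

theorem Polynomial.eventually_norm_mul_norm_eval_le {𝕜 : Type*} [NormedField 𝕜] {P Q : 𝕜[X]}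
    (hdeg : Q.natDegree + 1 < P.natDegree) :
    ∀ᶠ z in cobounded 𝕜, ‖z‖ * ‖Q.eval z‖ ≤ ‖P.eval z‖ := by
  have hlt : (X * Q).degree < P.degree :=
    degree_lt_degree ((natDegree_mul_le.trans (by rw [natDegree_X]; omega)).trans_lt hdeg)
  simpa [mul_comm] using (isLittleO_cobounded_of_degree_lt hlt).eventuallyLE

theorem exists_escape_radius {K 𝕜 : Type*} [Field K] [NormedField 𝕜] [Finite (K →+* 𝕜)]
    {p q : K[X]} (hdeg : q.natDegree + 1 < p.natDegree) :
    ∃ T : ℝ, 0 < T ∧ ∀ (τ : K →+* 𝕜) (z : 𝕜), T ≤ ‖z‖ →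
      ‖z‖ * ‖(q.map τ).eval z‖ ≤ ‖(p.map τ).eval z‖ := by
  have hall : ∀ᶠ z in cobounded 𝕜, ∀ τ : K →+* 𝕜,
      ‖z‖ * ‖(q.map τ).eval z‖ ≤ ‖(p.map τ).eval z‖ :=
    eventually_all.2 fun τ => eventually_norm_mul_norm_eval_le <| by
      rwa [natDegree_map, natDegree_map]
  obtain ⟨R, -, hR⟩ := hasBasis_cobounded_norm.eventually_iff.1 hall
  exact ⟨max R 1, by positivity, fun τ z hz => hR (le_of_max_le_left hz) τ⟩

theorem norm_le_norm_ratMap {P Q : ℂ[X]} {z : ℂ} (hQ : Q.eval z ≠ 0)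
    (h : ‖z‖ * ‖Q.eval z‖ ≤ ‖P.eval z‖) : ‖z‖ ≤ ‖ratMap P Q z‖ := by
  rwa [ratMap, norm_div, le_div_iff₀ (norm_pos_iff.2 hQ)]

theorem iterate_le_of_escape {X α : Type*} [LinearOrder α] {F : X → X} {H : X → α}
    {P : X → Prop} {T M : α} (hTM : T ≤ M) (hF : ∀ x, P x → T ≤ H x → H x ≤ H (F x))
    {x : X} {n : ℕ} (hP : ∀ j < n, P (F^[j] x)) (hn : H (F^[n] x) ≤ M) :
    ∀ j < n, H (F^[j] x) ≤ M := by
  intro j hj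
  by_contra! hMj
  have hM : ∀ k, j ≤ k → k ≤ n → M < H (F^[k] x) := by
    intro k hjk
    induction k, hjk using Nat.le_induction with
    | base => exact fun _ => hMj
    | succ k hjk ih =>
      intro hk
      have hMk := ih (by omega)
      rw [Function.iterate_succ_apply']
      exact hMk.trans_le (hF _ (hP k (by omega)) (hTM.trans hMk.le))
  exact (hM n hj.le le_rfl).not_ge hn

theorem Polynomial.eval_map_comp_apply {K L M : Type*} [Semiring K] [Semiring L] [Semiring M]
    (g : K →+* L) (σ : L →+* M) (p : K[X]) (y : L) :
    (p.map (σ.comp g)).eval (σ y) = σ ((p.map g).eval y) := by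
  rw [← Polynomial.map_map, eval_map_apply]

theorem ratMap_map_comp_apply {K L : Type*} [Field K] [Field L] (g : K →+* L)
    (σ : L →+* ℂ) (p q : K[X]) (y : L) :
    ratMap (p.map (σ.comp g)) (q.map (σ.comp g)) (σ y) =
      σ ((p.map g).eval y / (q.map g).eval y) := by
  simp only [ratMap, map_div₀, eval_map_comp_apply]

theorem isGreatest_house {β : ℂ} (hβ : IsAlgebraic ℚ β) :
    IsGreatest ((‖·‖) '' (minpoly ℚ β).rootSet ℂ) (house β) := by
  have hne : ((minpoly ℚ β).rootSet ℂ).Nonempty :=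
    ⟨β, mem_rootSet.2 ⟨minpoly.ne_zero hβ.isIntegral, minpoly.aeval ℚ β⟩⟩
  have hfin := ((minpoly ℚ β).rootSet_finite ℂ).image (‖·‖)
  exact ⟨(hne.image _).csSup_mem hfin, fun _ hx => le_csSup hfin.bddAbove hx⟩

section AlgebraicSubfield

variable {L : IntermediateField ℚ ℂ} [Algebra.IsAlgebraic ℚ L]

theorem rootSet_minpoly_coe (x : L) :
    (minpoly ℚ (x : ℂ)).rootSet ℂ = Set.range fun σ : L →ₐ[ℚ] ℂ => σ x := by
  rw [Algebra.IsAlgebraic.range_eval_eq_rootSet_minpoly]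
  exact congrArg (rootSet · ℂ) (minpoly.algebraMap_eq (algebraMap L ℂ).injective x)

theorem isGreatest_house_coe (x : L) :
    IsGreatest (Set.range fun σ : L →ₐ[ℚ] ℂ => ‖σ x‖) (house x) := by
  have hx : IsAlgebraic ℚ (x : ℂ) :=
    (Algebra.IsAlgebraic.isAlgebraic x).algHom (IsScalarTower.toAlgHom ℚ L ℂ)
  have := isGreatest_house hx
  rwa [rootSet_minpoly_coe, ← Set.range_comp] at this

theorem house_le_house_of_escape {K : Type*} [Field K] (g : K →+* L) {p q : K[X]} {T : ℝ}
    (hT : ∀ (τ : K →+* ℂ) (z : ℂ), T ≤ ‖z‖ → ‖z‖ * ‖(q.map τ).eval z‖ ≤ ‖(p.map τ).eval z‖)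
    {y : L} (hy : (q.map g).eval y ≠ 0) (hTy : T ≤ house y) :
    house y ≤ house ↑((p.map g).eval y / (q.map g).eval y) := by
  obtain ⟨σ, hσ : ‖σ y‖ = house y⟩ := (isGreatest_house_coe y).1
  have hq : (q.map ((σ : L →+* ℂ).comp g)).eval (σ y) ≠ 0 := by
    rw [← RingHom.coe_coe σ, eval_map_comp_apply]
    exact (_root_.map_ne_zero _).2 hy
  calc house y = ‖σ y‖ := hσ.symm
    _ ≤ ‖σ ((p.map g).eval y / (q.map g).eval y)‖ := by
      rw [← RingHom.coe_coe σ, ← ratMap_map_comp_apply]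
      exact norm_le_norm_ratMap hq (hT _ _ (hσ ▸ hTy))
    _ ≤ house ↑((p.map g).eval y / (q.map g).eval y) := (isGreatest_house_coe _).2 ⟨σ, rfl⟩

end AlgebraicSubfield

theorem house_bound_for_iterates_general {K : Type*} [Field K] [NumberField K]
    (f : K →+* ℂ) (p q : Polynomial K)
    (hdeg : q.natDegree + 1 < p.natDegree) :
    ∃ T : ℝ, 0 < T ∧
      ∀ A : ℝ, 1 ≤ A → ∀ (α : ℂ), IsAlgebraic ℚ α → ∀ n : ℕ, 1 ≤ n →
        (∀ j < n, (q.map f).eval ((ratMap (p.map f) (q.map f))^[j] α) ≠ 0) →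
        house ((ratMap (p.map f) (q.map f))^[n] α) ≤ A →
        ∀ j < n, house ((ratMap (p.map f) (q.map f))^[j] α) ≤ max T A := by
  obtain ⟨T, hT0, hT⟩ := exists_escape_radius (𝕜 := ℂ) hdeg
  refine ⟨T, hT0, fun A _ α hα n _ hne hn => ?_⟩
  let L := algebraicClosure ℚ ℂ
  have : Algebra.IsAlgebraic ℚ L := algebraicClosure.isAlgebraic ℚ ℂ
  let g : K →+* L := f.codRestrict L fun c => mem_algebraicClosure_iff.2 <|
    (Algebra.IsAlgebraic.isAlgebraic c).algHom f.toRatAlgHom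
  have hf : (algebraMap L ℂ).comp g = f := RingHom.ext fun _ => rfl
  let F : L → L := fun y => (p.map g).eval y / (q.map g).eval y
  have hF : Function.Semiconj (algebraMap L ℂ) F (ratMap (p.map f) (q.map f)) := fun y => by
    rw [← hf]; exact (ratMap_map_comp_apply g _ p q y).symm
  obtain ⟨a, rfl⟩ : ∃ a : L, (a : ℂ) = α := ⟨⟨α, mem_algebraicClosure_iff.2 hα⟩, rfl⟩
  have horbit (j : ℕ) : (ratMap (p.map f) (q.map f))^[j] a = algebraMap L ℂ (F^[j] a) :=
    (hF.iterate_right j a).symm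
  simp only [horbit] at hne hn ⊢
  refine iterate_le_of_escape (H := fun y : L => house y) (P := fun y => (q.map g).eval y ≠ 0)
    (le_max_left T A) (fun y hy hTy => house_le_house_of_escape g hT hy hTy) (fun j hj => ?_)
    (hn.trans (le_max_right T A))
  have := hne j hj
  rwa [← hf, eval_map_comp_apply, ne_eq, map_eq_zero] at this

/-- Let `h = p/q` over a number field `K` (embedded in `ℂ` via `f`) with
`deg p > deg q + 1`.  Then there is `T > 0`, depending only on `h`, such that for every
`A ≥ 1`, every algebraic `α` and `n ≥ 1` (all iterates being defined at `α`):
if the house of `hⁿ(α)` is at most `A`, then the house of `hʲ(α)` is at most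
`max T A` for `0 ≤ j ≤ n - 1`. -/
theorem house_bound_for_iterates {K : Type*} [Field K] [NumberField K]
    (f : K →+* ℂ) (p q : Polynomial K) (hq : q ≠ 0)
    (hdeg : q.natDegree + 1 < p.natDegree) :
    ∃ T : ℝ, 0 < T ∧
      ∀ A : ℝ, 1 ≤ A → ∀ (α : ℂ), IsAlgebraic ℚ α → ∀ n : ℕ, 1 ≤ n →
        (∀ j < n, (q.map f).eval ((ratMap (p.map f) (q.map f))^[j] α) ≠ 0) →
        house ((ratMap (p.map f) (q.map f))^[n] α) ≤ A →
        ∀ j < n, house ((ratMap (p.map f) (q.map f))^[j] α) ≤ max T A :=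
  house_bound_for_iterates_general f p q hdeg
end
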